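/- arXiv:1509.01734 — 2 statements merged into one kernel-verified Lean document; each statement's English description precedes it below -/
import Mathlib

section
/- Let V be a finite-dimensional real inner product space and let J : V → V be a linear isometry satisfying J ∘ J = -id. Define the bilinear form ω(v, w) := ⟪J v, w⟫, and for a subspace W ⊆ V define its ω-orthogonal W^ω := {v ∈ V : ω(w, v) = 0 for all w ∈ W}. Then for every subspace W ⊆ V one has W^ω ∩ J(W) = {0} and W^ω + J(W) = V; that is, V is the internal direct sum of W^ω and J(W). -/
/-- On a finite-dimensional real inner product space with a compatible complex
structure `J` (an isometry with `J² = -id`), define `ω(v,w) = ⟪Jv, w⟫`. For any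
subspace `W`, the symplectic complement `W^ω` and `J(W)` intersect trivially and
span: `V = W^ω ⊕ J(W)`. -/
theorem symplecticComplement_inter_J_eq_bot (V : Type*) [NormedAddCommGroup V]
    [InnerProductSpace ℝ V] [FiniteDimensional ℝ V] (J : V →ₗ[ℝ] V)
    (hJiso : ∀ v w : V, (inner ℝ (J v) (J w) : ℝ) = inner ℝ v w)
    (hJ2 : ∀ v : V, J (J v) = -v) (W : Submodule ℝ V) :
    ({v : V | ∀ w ∈ W, (inner ℝ (J w) v : ℝ) = 0} ∩ (J '' (W : Set V)) = {0}) ∧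
    (∀ v : V, ∃ a ∈ {v : V | ∀ w ∈ W, (inner ℝ (J w) v : ℝ) = 0},
      ∃ w ∈ W, v = a + J w) := by
  have hset : {v : V | ∀ w ∈ W, (inner ℝ (J w) v : ℝ) = 0} = ((W.map J)ᗮ : Set V) := by
    ext v
    simp only [Set.mem_setOf_eq, SetLike.mem_coe, Submodule.mem_orthogonal]
    constructor
    · rintro h u hu
      rcases Submodule.mem_map.mp hu with ⟨w, hw, rfl⟩
      exact h w hw
    · intro h w hw
      exact h (J w) (Submodule.mem_map_of_mem hw)
  constructor
  · ext v
    simp only [Set.mem_inter_iff, Set.mem_singleton_iff]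
    constructor
    · rintro ⟨h1, w, hw, rfl⟩
      have := h1 w hw
      have hvv : (inner ℝ (J w) (J w) : ℝ) = 0 := this
      have := inner_self_eq_zero.mp hvv
      exact this
    · rintro rfl
      refine ⟨fun w hw => inner_zero_right _, 0, W.zero_mem, by simp⟩
  · intro v
    have hsup : (W.map J) ⊔ (W.map J)ᗮ = ⊤ := Submodule.sup_orthogonal_of_hasOrthogonalProjection
    have hv : v ∈ (W.map J) ⊔ (W.map J)ᗮ := hsup ▸ Submodule.mem_top
    rcases Submodule.mem_sup.mp hv with ⟨b, hb, a, ha, rfl⟩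
    rcases Submodule.mem_map.mp hb with ⟨w, hw, rfl⟩
    refine ⟨a, ?_, w, hw, by abel⟩
    rw [hset]; exact ha
end

section
/- Let V be a finite-dimensional real inner product space and let J : V → V be a linear isometry satisfying J ∘ J = -id. Define the bilinear form ω(v, w) := ⟪J v, w⟫, and for a subspace W ⊆ V define its ω-orthogonal W^ω := {v ∈ V : ω(w, v) = 0 for all w ∈ W}. Suppose W ⊆ V is a subspace that is ω-isotropic, i.e. ω(w, w') = 0 for all w, w' ∈ W, and let H := W^ω ∩ W^⊥ (the intersection of the ω-orthogonal of W with the inner-product orthogonal complement of W). Then V is the internal direct sum V = H ⊕ W ⊕ J(W), and H is J-invariant: J(H) = H. -/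
/-!
Set `U := W ⊔ J(W)`. Since `J² = -1`, `U` is `J`-invariant, and since `J` is skew-adjoint
(`⟪J v, w⟫ = -⟪v, J w⟫`, from `J` being an isometry with `J² = -1`), so is `Uᗮ`; the set `H` is
exactly `Uᗮ`. Hence `V = U ⊕ Uᗮ = H ⊕ U`, and `U = W ⊕ J(W)` because isotropy of `W` means
precisely `J(W) ⟂ W`.
-/

namespace KahlerReduction

open scoped RealInnerProductSpace

variable {V : Type*} [NormedAddCommGroup V] [InnerProductSpace ℝ V] {J : V →ₗ[ℝ] V}

theorem injective_of_apply_apply_eq_neg (hJ2 : ∀ v : V, J (J v) = -v) : Function.Injective J :=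
  fun v w h => by simpa [hJ2] using congrArg J h

theorem inner_apply_left_eq_neg_inner_apply_right (hJiso : ∀ v w : V, ⟪J v, J w⟫ = ⟪v, w⟫)
    (hJ2 : ∀ v : V, J (J v) = -v) (v w : V) : ⟪J v, w⟫ = -⟪v, J w⟫ := by
  have h := hJiso v (J w)
  rw [hJ2, inner_neg_right] at h
  linarith

theorem setOf_inner_apply_eq_zero_inter_orthogonal (J : V →ₗ[ℝ] V) (W : Submodule ℝ V) :
    {v : V | ∀ w ∈ W, ⟪J w, v⟫ = 0} ∩ (Wᗮ : Set V) = ((W ⊔ W.map J)ᗮ : Set V) := by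
  ext v
  simp [← Submodule.inf_orthogonal, Submodule.mem_orthogonal, and_comm]

theorem isOrtho_map_of_isotropic {W : Submodule ℝ V}
    (hisotropic : ∀ w ∈ W, ∀ w' ∈ W, ⟪J w, w'⟫ = 0) : W ⟂ W.map J := by
  refine Submodule.isOrtho_comm.1 (Submodule.isOrtho_iff_le.2 ?_)
  rintro _ ⟨w, hw, rfl⟩
  exact (Submodule.mem_orthogonal' _ _).2 fun w' hw' => hisotropic w hw w' hw'

theorem map_sup_map_le (hJ2 : ∀ v : V, J (J v) = -v) (W : Submodule ℝ V) :
    (W ⊔ W.map J).map J ≤ W ⊔ W.map J := by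
  rw [Submodule.map_sup]
  refine sup_le le_sup_right (le_sup_of_le_left ?_)
  rintro _ ⟨_, ⟨w, hw, rfl⟩, rfl⟩
  simpa [hJ2] using W.neg_mem hw

theorem orthogonal_map_le (hskew : ∀ v w : V, ⟪J v, w⟫ = -⟪v, J w⟫) {U : Submodule ℝ V}
    (hU : U.map J ≤ U) : Uᗮ.map J ≤ Uᗮ := by
  rintro _ ⟨v, hv, rfl⟩
  refine (Submodule.mem_orthogonal _ _).2 fun u hu => ?_
  rw [← neg_eq_zero, ← hskew]
  exact Submodule.inner_right_of_mem_orthogonal (hU (Submodule.mem_map_of_mem hu)) hv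

theorem image_eq_of_map_le (hJ2 : ∀ v : V, J (J v) = -v) {S : Submodule ℝ V}
    (hS : S.map J ≤ S) : J '' S = S := by
  refine Set.Subset.antisymm ?_ fun v hv =>
    ⟨-J v, S.neg_mem (hS (Submodule.mem_map_of_mem hv)), by rw [map_neg, hJ2, neg_neg]⟩
  rintro _ ⟨v, hv, rfl⟩
  exact hS (Submodule.mem_map_of_mem hv)

end KahlerReduction

open KahlerReduction Submodule

/-- Kähler reduction, linear-algebra core: if `W` is an `ω`-isotropic subspace
of a finite-dimensional real inner product space with compatible complex
structure `J` (where `ω(v,w) = ⟪Jv, w⟫`), and `H := W^ω ∩ W^⊥`, then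
`V = H ⊕ W ⊕ J(W)` and `H` is `J`-invariant. -/
theorem kahler_reduction_splitting (V : Type*) [NormedAddCommGroup V]
    [InnerProductSpace ℝ V] [FiniteDimensional ℝ V] (J : V →ₗ[ℝ] V)
    (hJiso : ∀ v w : V, (inner ℝ (J v) (J w) : ℝ) = inner ℝ v w)
    (hJ2 : ∀ v : V, J (J v) = -v) (W : Submodule ℝ V)
    (hisotropic : ∀ w ∈ W, ∀ w' ∈ W, (inner ℝ (J w) w' : ℝ) = 0) :
    (∀ v : V, ∃ h ∈ {v : V | ∀ w ∈ W, (inner ℝ (J w) v : ℝ) = 0} ∩ (Wᗮ : Set V),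
        ∃ w₁ ∈ W, ∃ w₂ ∈ W, v = h + w₁ + J w₂) ∧
    (∀ h ∈ {v : V | ∀ w ∈ W, (inner ℝ (J w) v : ℝ) = 0} ∩ (Wᗮ : Set V),
        ∀ w₁ ∈ W, ∀ w₂ ∈ W, h + w₁ + J w₂ = 0 → h = 0 ∧ w₁ = 0 ∧ w₂ = 0) ∧
    (J '' ({v : V | ∀ w ∈ W, (inner ℝ (J w) v : ℝ) = 0} ∩ (Wᗮ : Set V)) =
      {v : V | ∀ w ∈ W, (inner ℝ (J w) v : ℝ) = 0} ∩ (Wᗮ : Set V)) := by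
  rw [setOf_inner_apply_eq_zero_inter_orthogonal]
  set U := W ⊔ W.map J
  have hskew := inner_apply_left_eq_neg_inner_apply_right hJiso hJ2
  refine ⟨fun v => ?_, fun h hh w₁ hw₁ w₂ hw₂ hsum => ?_,
    image_eq_of_map_le hJ2 (orthogonal_map_le hskew (map_sup_map_le hJ2 W))⟩
  · obtain ⟨u, hu, h, hh, rfl⟩ := U.exists_add_mem_mem_orthogonal v
    obtain ⟨w₁, hw₁, _, ⟨w₂, hw₂, rfl⟩, rfl⟩ := mem_sup.1 hu
    exact ⟨h, hh, w₁, hw₁, w₂, hw₂, by abel⟩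
  · have hu : w₁ + J w₂ ∈ U := add_mem (mem_sup_left hw₁) (mem_sup_right (mem_map_of_mem hw₂))
    obtain ⟨hh0, hu0⟩ :=
      disjoint_iff_add_eq_zero.1 U.orthogonal_disjoint.symm hh hu (by rwa [← add_assoc])
    obtain ⟨hw₁0, hJw₂0⟩ := disjoint_iff_add_eq_zero.1
      (isOrtho_map_of_isotropic hisotropic).disjoint hw₁ (mem_map_of_mem hw₂) hu0
    exact ⟨hh0, hw₁0, injective_of_apply_apply_eq_neg hJ2 (by rw [hJw₂0, map_zero])⟩
end
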